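/- arXiv:1908.01162 — 8 statements merged into one kernel-verified Lean document; each statement's English description precedes it below -/
import Mathlib

section
/- Let φ : (−1,1) → ℝ be a C² solution of Lφ = 0 that is nonincreasing and strictly positive on (−1,1). Then φ''(x) ≥ 0 for all x ∈ (−1,1), i.e., φ is convex on (−1,1). -/
open Set Filter Topology

/-! Write `g x = 2λxφ'(x) + αφ(x)`, so that the equation reads `g = μ²/2 (1 - x²)² φ''`.
Since `φ' ≤ 0 < φ`, `g > 0` on `(-1, 0]`; so if `φ''(x₀) < 0` then `x₀ > 0` and `g(x₀) = c < 0`.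
At a point `x > 0` where `g < 0`, both `φ'` and `φ''` are negative, hence so is
`g' = 2λ(φ' + xφ'') + αφ'`; a fencing argument then gives `g ≤ c` on `[x₀, 1)`.
As `(1 - x²)² ≤ 4(1 - x)²`, this means `φ'' ≤ -K/(1 - x)²` there, with `K = -c/(2μ²) > 0`.
Integrating twice, `φ(x) ≤ C + Dx + K log(1 - x) → -∞` as `x → 1⁻`, contradicting `φ > 0`. -/

theorem image_le_of_deriv_le_deriv_Ico {f f' B B' : ℝ → ℝ} {a b x : ℝ}
    (hf : ∀ y ∈ Ico a b, HasDerivAt f (f' y) y) (hB : ∀ y ∈ Ico a b, HasDerivAt B (B' y) y)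
    (ha : f a ≤ B a) (hderiv : ∀ y ∈ Ico a b, f' y ≤ B' y) (hx : x ∈ Ico a b) : f x ≤ B x := by
  have hsub : Icc a x ⊆ Ico a b := Icc_subset_Ico_right hx.2
  have hsub' : Ico a x ⊆ Ico a b := Ico_subset_Icc_self.trans hsub
  exact image_le_of_deriv_right_le_deriv_boundary
    (fun y hy => (hf y (hsub hy)).continuousAt.continuousWithinAt)
    (fun y hy => (hf y (hsub' hy)).hasDerivWithinAt) ha
    (fun y hy => (hB y (hsub hy)).continuousAt.continuousWithinAt)
    (fun y hy => (hB y (hsub' hy)).hasDerivWithinAt)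
    (fun y hy => hderiv y (hsub' hy)) ⟨hx.1, le_rfl⟩

theorem tendsto_atBot_of_hasDerivAt_le_neg_div_sq {f f' f'' : ℝ → ℝ} {a b K : ℝ} (hab : a < b)
    (hK : 0 < K) (hf : ∀ x ∈ Ico a b, HasDerivAt f (f' x) x)
    (hf' : ∀ x ∈ Ico a b, HasDerivAt f' (f'' x) x)
    (hf'' : ∀ x ∈ Ico a b, f'' x ≤ -(K / (b - x) ^ 2)) : Tendsto f (𝓝[<] b) atBot := by
  set D := f' a + K / (b - a)
  set C := f a - D * a - K * Real.log (b - a)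
  have hgap' : ∀ x, HasDerivAt (fun y => b - y) (-1) x := fun x => by
    simpa using (hasDerivAt_id x).const_sub b
  have hrec : ∀ x ∈ Ico a b,
      HasDerivAt (fun y => D - K / (b - y)) (-(K / (b - x) ^ 2)) x := fun x hx =>
    (((hasDerivAt_const x K).fun_div (hgap' x) (sub_pos.2 hx.2).ne').const_sub D).congr_deriv
      (by ring)
  have hlog : ∀ x ∈ Ico a b,
      HasDerivAt (fun y => C + D * y + K * Real.log (b - y)) (D - K / (b - x)) x := fun x hx =>
    ((((hasDerivAt_id x).const_mul D).const_add C).add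
      (((hgap' x).log (sub_pos.2 hx.2).ne').const_mul K)).congr_deriv (by ring)
  have hf'_le : ∀ x ∈ Ico a b, f' x ≤ D - K / (b - x) := fun x hx =>
    image_le_of_deriv_le_deriv_Ico hf' hrec (by simp [D]) hf'' hx
  have hf_le : ∀ x ∈ Ico a b, f x ≤ C + D * x + K * Real.log (b - x) := fun x hx =>
    image_le_of_deriv_le_deriv_Ico hf hlog (by simp only [C]; linarith) hf'_le hx
  have hgap : Tendsto (fun x => b - x) (𝓝[<] b) (𝓝[>] 0) := by
    refine tendsto_nhdsWithin_iff.2 ⟨?_, ?_⟩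
    · exact ((continuous_sub_left b).tendsto' b 0 (sub_self b)).mono_left nhdsWithin_le_nhds
    · filter_upwards [self_mem_nhdsWithin] with x hx using sub_pos.2 (mem_Iio.1 hx)
  have hbound : Tendsto (fun x => C + D * x + K * Real.log (b - x)) (𝓝[<] b) atBot :=
    (((continuous_const.add (continuous_const.mul continuous_id)).tendsto b).mono_left
      nhdsWithin_le_nhds).add_atBot ((Real.tendsto_log_nhdsGT_zero.comp hgap).const_mul_atBot hK)
  refine tendsto_atBot_mono' _ ?_ hbound
  filter_upwards [Ico_mem_nhdsLT hab] with x hx using hf_le x hx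

theorem le_neg_div_sq_of_mul_le {mu c x y : ℝ} (hmu : mu ≠ 0) (hx : x ∈ Ioo (-1 : ℝ) 1)
    (hc : c < 0) (h : mu ^ 2 / 2 * (1 - x ^ 2) ^ 2 * y ≤ c) :
    y ≤ -(-c / (2 * mu ^ 2) / (1 - x) ^ 2) := by
  have hy : y < 0 := by
    by_contra! hy
    linarith [mul_nonneg (by positivity : (0 : ℝ) ≤ mu ^ 2 / 2 * (1 - x ^ 2) ^ 2) hy]
  have hcoef : mu ^ 2 / 2 * (1 - x ^ 2) ^ 2 ≤ 2 * mu ^ 2 * (1 - x) ^ 2 := by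
    have h4 : (1 + x) ^ 2 ≤ 4 := by nlinarith [hx.1, hx.2]
    calc mu ^ 2 / 2 * (1 - x ^ 2) ^ 2 = mu ^ 2 / 2 * (1 - x) ^ 2 * (1 + x) ^ 2 := by ring
      _ ≤ mu ^ 2 / 2 * (1 - x) ^ 2 * 4 := by gcongr
      _ = 2 * mu ^ 2 * (1 - x) ^ 2 := by ring
  have hpos : 0 < 2 * mu ^ 2 * (1 - x) ^ 2 := by
    have : 0 < 1 - x := sub_pos.2 hx.2
    positivity
  rw [show -(-c / (2 * mu ^ 2) / (1 - x) ^ 2) = c / (2 * mu ^ 2 * (1 - x) ^ 2) by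
    simp only [neg_div, neg_neg, div_div], le_div_iff₀ hpos]
  nlinarith [mul_le_mul_of_nonpos_right hcoef hy.le]

section

variable {lam mu alp : ℝ} {φ φ' φ'' : ℝ → ℝ}

theorem flux_le_of_flux_neg {x₀ : ℝ} (hlam : 0 < lam) (halp : 0 < alp)
    (hd1 : ∀ x ∈ Ioo (-1 : ℝ) 1, HasDerivAt φ (φ' x) x)
    (hd2 : ∀ x ∈ Ioo (-1 : ℝ) 1, HasDerivAt φ' (φ'' x) x)
    (hode : ∀ x ∈ Ioo (-1 : ℝ) 1,
      mu ^ 2 / 2 * (1 - x ^ 2) ^ 2 * φ'' x - 2 * lam * x * φ' x - alp * φ x = 0)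
    (hpos : ∀ x ∈ Ioo (-1 : ℝ) 1, 0 < φ x) (hx₀ : 0 < x₀)
    (hneg : 2 * lam * x₀ * φ' x₀ + alp * φ x₀ < 0) {x : ℝ} (hx : x ∈ Ico x₀ 1) :
    2 * lam * x * φ' x + alp * φ x ≤ 2 * lam * x₀ * φ' x₀ + alp * φ x₀ := by
  set g : ℝ → ℝ := fun y => 2 * lam * y * φ' y + alp * φ y
  have hsub : Icc x₀ x ⊆ Ioo (-1 : ℝ) 1 := fun y hy => ⟨by linarith [hy.1], hy.2.trans_lt hx.2⟩
  have hg : ∀ y ∈ Ioo (-1 : ℝ) 1,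
      HasDerivAt g (2 * lam * (φ' y + y * φ'' y) + alp * φ' y) y := fun y hy =>
    ((((hasDerivAt_id y).const_mul (2 * lam)).fun_mul (hd2 y hy)).fun_add
      ((hd1 y hy).const_mul alp)).congr_deriv (by simp only [id]; ring)
  refine image_le_of_deriv_right_lt_deriv_boundary (B := fun _ => g x₀) (B' := 0)
    (fun y hy => (hg y (hsub hy)).continuousAt.continuousWithinAt)
    (fun y hy => (hg y (hsub (Ico_subset_Icc_self hy))).hasDerivWithinAt) le_rfl
    (fun _ => hasDerivAt_const _ _) ?_ ⟨hx.1, le_rfl⟩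
  intro y hy hgy
  have hyI := hsub (Ico_subset_Icc_self hy)
  have hy0 : 0 < y := hx₀.trans_le hy.1
  have hgy_neg : g y < 0 := hgy ▸ hneg
  have hφ'' : φ'' y < 0 := by
    by_contra! h
    nlinarith [hode y hyI, mul_nonneg (by positivity : (0 : ℝ) ≤ mu ^ 2 / 2 * (1 - y ^ 2) ^ 2) h]
  have hφ' : φ' y < 0 := by
    by_contra! h
    nlinarith [mul_nonneg (mul_pos hlam hy0).le h, mul_pos halp (hpos y hyI)]
  show 2 * lam * (φ' y + y * φ'' y) + alp * φ' y < 0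
  nlinarith [mul_pos hlam hy0, mul_neg_of_pos_of_neg (mul_pos hlam hy0) hφ'',
    mul_neg_of_pos_of_neg hlam hφ', mul_neg_of_pos_of_neg halp hφ']

theorem secondDeriv_nonneg (hlam : 0 < lam) (hmu : 0 < mu) (halp : 0 < alp)
    (hd1 : ∀ x ∈ Ioo (-1 : ℝ) 1, HasDerivAt φ (φ' x) x)
    (hd2 : ∀ x ∈ Ioo (-1 : ℝ) 1, HasDerivAt φ' (φ'' x) x)
    (hode : ∀ x ∈ Ioo (-1 : ℝ) 1,
      mu ^ 2 / 2 * (1 - x ^ 2) ^ 2 * φ'' x - 2 * lam * x * φ' x - alp * φ x = 0)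
    (hφ' : ∀ x ∈ Ioo (-1 : ℝ) 1, φ' x ≤ 0) (hpos : ∀ x ∈ Ioo (-1 : ℝ) 1, 0 < φ x)
    {x₀ : ℝ} (hx₀ : x₀ ∈ Ioo (-1 : ℝ) 1) : 0 ≤ φ'' x₀ := by
  by_contra! hneg
  set c := 2 * lam * x₀ * φ' x₀ + alp * φ x₀
  have hc : c < 0 := by
    have h1x₀ : 0 < 1 - x₀ ^ 2 := by nlinarith [hx₀.1, hx₀.2]
    nlinarith [hode x₀ hx₀, mul_neg_of_pos_of_neg (by positivity :
      (0 : ℝ) < mu ^ 2 / 2 * (1 - x₀ ^ 2) ^ 2) hneg]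
  have hx₀pos : 0 < x₀ := by
    by_contra! h
    nlinarith [mul_nonneg (mul_nonneg hlam.le (neg_nonneg.2 h)) (neg_nonneg.2 (hφ' x₀ hx₀)),
      mul_pos halp (hpos x₀ hx₀)]
  have hIco : Ico x₀ 1 ⊆ Ioo (-1 : ℝ) 1 := fun x hx => ⟨by linarith [hx.1], hx.2⟩
  have hbound : ∀ x ∈ Ico x₀ 1, φ'' x ≤ -(-c / (2 * mu ^ 2) / (1 - x) ^ 2) := fun x hx =>
    le_neg_div_sq_of_mul_le hmu.ne' (hIco hx) hc <| by
      linarith [hode x (hIco hx), flux_le_of_flux_neg hlam halp hd1 hd2 hode hpos hx₀pos hc hx]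
  have hbot := tendsto_atBot_of_hasDerivAt_le_neg_div_sq hx₀.2
    (div_pos (neg_pos.2 hc) (by positivity))
    (fun x hx => hd1 x (hIco hx)) (fun x hx => hd2 x (hIco hx)) hbound
  obtain ⟨x, hφx, hx⟩ := ((hbot.eventually_lt_atBot 0).and (Ico_mem_nhdsLT hx₀.2)).exists
  exact (hpos x (hIco hx)).not_gt hφx

end

/-- A nonincreasing strictly positive solution `φ` of `Lφ = 0` on `(−1,1)` satisfies
`φ'' ≥ 0`, i.e. `φ` is convex on `(−1,1)`. -/
theorem stmt2 (lam mu alp : ℝ) (hlam : 0 < lam) (hmu : 0 < mu) (halp : 0 < alp)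
    (φ φ' φ'' : ℝ → ℝ)
    (hd1 : ∀ x ∈ Set.Ioo (-1 : ℝ) 1, HasDerivAt φ (φ' x) x)
    (hd2 : ∀ x ∈ Set.Ioo (-1 : ℝ) 1, HasDerivAt φ' (φ'' x) x)
    (hode : ∀ x ∈ Set.Ioo (-1 : ℝ) 1,
      mu ^ 2 / 2 * (1 - x ^ 2) ^ 2 * φ'' x - 2 * lam * x * φ' x - alp * φ x = 0)
    (hanti : AntitoneOn φ (Set.Ioo (-1 : ℝ) 1))
    (hpos : ∀ x ∈ Set.Ioo (-1 : ℝ) 1, 0 < φ x) :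
    (∀ x ∈ Set.Ioo (-1 : ℝ) 1, 0 ≤ φ'' x) ∧ ConvexOn ℝ (Set.Ioo (-1 : ℝ) 1) φ := by
  have hφ' : ∀ x ∈ Ioo (-1 : ℝ) 1, φ' x ≤ 0 := fun x hx => by
    simpa only [derivWithin_of_isOpen isOpen_Ioo hx, (hd1 x hx).deriv] using
      hanti.derivWithin_nonpos (x := x)
  have hφ'' : ∀ x ∈ Ioo (-1 : ℝ) 1, 0 ≤ φ'' x := fun x hx =>
    secondDeriv_nonneg hlam hmu halp hd1 hd2 hode hφ' hpos hx
  refine ⟨hφ'', convexOn_of_hasDerivWithinAt2_nonneg (f' := φ') (f'' := φ'') (convex_Ioo _ _)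
    (fun x hx => (hd1 x hx).continuousAt.continuousWithinAt) ?_ ?_ ?_⟩ <;>
    simp only [interior_Ioo]
  · exact fun x hx => (hd1 x hx).hasDerivWithinAt
  · exact fun x hx => (hd2 x hx).hasDerivWithinAt
  · exact hφ''
end

section
/- Let φ : (−1,1) → ℝ be a C² solution of Lφ = 0 that is nonincreasing and strictly positive on (−1,1). Then φ is strictly convex on (−1,1). -/
open Set Filter Topology

/-!
Since `φ` is nonincreasing, `φ' ≤ 0`, and `φ'` cannot vanish: at a zero `φ'` has a local maximum,
so `φ'' = 0` there and the equation gives `αφ = 0`. The equation reads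
`(μ²/2)(1 - x²)² φ'' = w` with `w = 2λxφ' + αφ`, so it suffices to show `w > 0`.
With the integrating factor `E = exp(-(2λ/μ²)/(1 - x²))` the `φ''`-terms cancel and
`(wE)' = (2λ + α)φ'E < 0`. So if `w(x₁) ≤ 0`, then `wE ≤ -c < 0` beyond some `x₂ > x₁`, and as
`0 < E ≤ 1` also `w ≤ -c`. The equation then gives `(1 - x)² φ'' ≤ -c/(2μ²)`, and integrating
twice, `φ(x) ≤ C + (c/(2μ²)) log(1 - x) → -∞` as `x → 1`, contradicting `φ > 0`.
-/

theorem AntitoneOn.hasDerivAt_nonpos {f : ℝ → ℝ} {f' x : ℝ} {s : Set ℝ} (hf : AntitoneOn f s)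
    (hs : IsOpen s) (hx : x ∈ s) (hd : HasDerivAt f f' x) : f' ≤ 0 := by
  rw [← hd.deriv, ← derivWithin_of_isOpen hs hx]
  exact hf.derivWithin_nonpos

theorem strictConvexOn_of_hasDerivAt2_pos {D : Set ℝ} (hD : Convex ℝ D) (hDo : IsOpen D)
    {f f' f'' : ℝ → ℝ} (hf : ∀ x ∈ D, HasDerivAt f (f' x) x)
    (hf' : ∀ x ∈ D, HasDerivAt f' (f'' x) x) (hf'' : ∀ x ∈ D, 0 < f'' x) :
    StrictConvexOn ℝ D f := by
  have hmono : StrictMonoOn f' D := by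
    refine strictMonoOn_of_hasDerivWithinAt_pos (f' := f'') hD
      (fun x hx => (hf' x hx).continuousAt.continuousWithinAt) ?_ ?_ <;> rw [hDo.interior_eq]
    exacts [fun x hx => (hf' x hx).hasDerivWithinAt, hf'']
  refine StrictMonoOn.strictConvexOn_of_deriv hD
    (fun x hx => (hf x hx).continuousAt.continuousWithinAt) ?_
  rw [hDo.interior_eq]
  exact hmono.congr fun x hx => ((hf x hx).deriv).symm

theorem tendsto_log_sub_nhdsLT_atBot (b : ℝ) :
    Tendsto (fun x => Real.log (b - x)) (𝓝[<] b) atBot := by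
  refine Real.tendsto_log_nhdsGT_zero.comp
    (tendsto_nhdsWithin_of_tendsto_nhds_of_eventually_within _ ?_ ?_)
  · exact ((continuous_sub_left b).tendsto' b 0 (sub_self b)).mono_left nhdsWithin_le_nhds
  · filter_upwards [self_mem_nhdsWithin] with x hx
    exact show 0 < b - x from sub_pos.2 hx

theorem tendsto_atBot_of_sq_mul_deriv2_le_neg {f f' f'' : ℝ → ℝ} {a b k : ℝ} (hab : a < b)
    (hk : k < 0) (hf : ∀ x ∈ Ioo a b, HasDerivAt f (f' x) x)
    (hf' : ∀ x ∈ Ioo a b, HasDerivAt f' (f'' x) x)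
    (hbound : ∀ x ∈ Ioo a b, (b - x) ^ 2 * f'' x ≤ k) :
    Tendsto f (𝓝[<] b) atBot := by
  obtain ⟨c, hac, hcb⟩ := exists_between hab
  have hsub : ∀ x ∈ Ioo a b, b - x ≠ 0 := fun x hx => (sub_pos.2 hx.2).ne'
  have hsubD (x : ℝ) : HasDerivAt (fun y => b - y) (-1) x := by
    simpa using (hasDerivAt_id x).const_sub b
  set g : ℝ → ℝ := fun x => f' x - k * (b - x)⁻¹
  have hgd : ∀ x ∈ Ioo a b, HasDerivAt g (f'' x - k / (b - x) ^ 2) x := fun x hx => by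
    refine ((hf' x hx).sub (((hsubD x).inv (hsub x hx)).const_mul k)).congr_deriv ?_
    ring
  have hg : AntitoneOn g (Ioo a b) := by
    refine antitoneOn_of_hasDerivWithinAt_nonpos (f' := fun x => f'' x - k / (b - x) ^ 2)
      (convex_Ioo a b) (fun x hx => (hgd x hx).continuousAt.continuousWithinAt) ?_ ?_ <;>
      rw [interior_Ioo]
    · exact fun x hx => (hgd x hx).hasDerivWithinAt
    · intro x hx
      have hsq : 0 < (b - x) ^ 2 := pow_pos (sub_pos.2 hx.2) 2
      have : f'' x ≤ k / (b - x) ^ 2 := by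
        rw [le_div_iff₀ hsq]
        linarith [hbound x hx]
      linarith
  set K : ℝ → ℝ := fun x => f x + k * Real.log (b - x) - g c * x
  have hKd : ∀ x ∈ Ioo a b, HasDerivAt K (g x - g c) x := fun x hx => by
    refine (((hf x hx).add (((hsubD x).log (hsub x hx)).const_mul k)).sub
      ((hasDerivAt_id x).const_mul (g c))).congr_deriv ?_
    simp only [g]
    ring
  have hcb' : Ico c b ⊆ Ioo a b := fun x hx => ⟨hac.trans_le hx.1, hx.2⟩
  have hK : AntitoneOn K (Ico c b) := by
    refine antitoneOn_of_hasDerivWithinAt_nonpos (f' := fun x => g x - g c) (convex_Ico c b)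
      (fun x hx => (hKd x (hcb' hx)).continuousAt.continuousWithinAt) ?_ ?_ <;> rw [interior_Ico]
    · exact fun x hx => (hKd x (hcb' (Ioo_subset_Ico_self hx))).hasDerivWithinAt
    · exact fun x hx => sub_nonpos.2 (hg ⟨hac, hcb⟩ (hcb' (Ioo_subset_Ico_self hx)) hx.1.le)
  have hle : ∀ x ∈ Ico c b, f x ≤ K c + g c * x + -k * Real.log (b - x) := fun x hx => by
    have := hK (left_mem_Ico.2 hcb) hx hx.1
    simp only [K] at this
    linarith
  have hlim : Tendsto (fun x => K c + g c * x + -k * Real.log (b - x)) (𝓝[<] b) atBot :=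
    Tendsto.add_atBot (tendsto_nhdsWithin_of_tendsto_nhds (by fun_prop : Continuous fun x =>
      K c + g c * x).continuousAt) ((tendsto_log_sub_nhdsLT_atBot b).const_mul_atBot (neg_pos.2 hk))
  exact tendsto_atBot_mono' _ (eventually_of_mem (Ico_mem_nhdsLT hcb) hle) hlim

theorem one_sub_sq_pos_of_mem_Ioo {x : ℝ} (hx : x ∈ Ioo (-1 : ℝ) 1) : 0 < 1 - x ^ 2 := by
  nlinarith [hx.1, hx.2]

namespace DegenerateODE

variable {lam mu alp : ℝ} {φ φ' φ'' : ℝ → ℝ}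

def forcing (lam alp : ℝ) (φ φ' : ℝ → ℝ) (x : ℝ) : ℝ := 2 * lam * x * φ' x + alp * φ x

noncomputable def integratingFactor (lam mu x : ℝ) : ℝ :=
  Real.exp (-(2 * lam / mu ^ 2) * (1 - x ^ 2)⁻¹)

theorem integratingFactor_pos (lam mu x : ℝ) : 0 < integratingFactor lam mu x := Real.exp_pos _

theorem integratingFactor_le_one (hlam : 0 ≤ lam) {x : ℝ} (hx : x ∈ Ioo (-1 : ℝ) 1) :
    integratingFactor lam mu x ≤ 1 := by
  refine Real.exp_le_one_iff.2 (mul_nonpos_of_nonpos_of_nonneg ?_ ?_)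
  · exact neg_nonpos.2 (by positivity)
  · exact (inv_pos.2 (one_sub_sq_pos_of_mem_Ioo hx)).le

theorem hasDerivAt_forcing_mul_integratingFactor (hmu : mu ≠ 0) {x : ℝ} (hx : 1 - x ^ 2 ≠ 0)
    (hd1 : HasDerivAt φ (φ' x) x) (hd2 : HasDerivAt φ' (φ'' x) x)
    (hode : mu ^ 2 / 2 * (1 - x ^ 2) ^ 2 * φ'' x - 2 * lam * x * φ' x - alp * φ x = 0) :
    HasDerivAt (fun y => forcing lam alp φ φ' y * integratingFactor lam mu y)
      ((2 * lam + alp) * φ' x * integratingFactor lam mu x) x := by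
  have hw : HasDerivAt (forcing lam alp φ φ')
      (2 * lam * φ' x + 2 * lam * x * φ'' x + alp * φ' x) x := by
    have := ((hasDerivAt_id x).const_mul (2 * lam)).mul hd2 |>.add (hd1.const_mul alp)
    exact this.congr_deriv (by simp only [id]; ring)
  have hE : HasDerivAt (integratingFactor lam mu)
      (integratingFactor lam mu x * (-(2 * lam / mu ^ 2) * (2 * x / (1 - x ^ 2) ^ 2))) x := by
    have := (((hasDerivAt_pow 2 x).const_sub 1).inv hx).const_mul (-(2 * lam / mu ^ 2)) |>.exp
    exact this.congr_deriv (by simp only [integratingFactor, Pi.inv_apply]; push_cast; ring)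
  refine (hw.mul hE).congr_deriv ?_
  simp only [forcing]
  field_simp
  linear_combination (4 * lam * x * integratingFactor lam mu x) * hode

theorem deriv_neg_of_ode (halp : 0 < alp)
    (hd1 : ∀ x ∈ Ioo (-1 : ℝ) 1, HasDerivAt φ (φ' x) x)
    (hd2 : ∀ x ∈ Ioo (-1 : ℝ) 1, HasDerivAt φ' (φ'' x) x)
    (hode : ∀ x ∈ Ioo (-1 : ℝ) 1,
      mu ^ 2 / 2 * (1 - x ^ 2) ^ 2 * φ'' x - 2 * lam * x * φ' x - alp * φ x = 0)
    (hanti : AntitoneOn φ (Ioo (-1 : ℝ) 1)) (hpos : ∀ x ∈ Ioo (-1 : ℝ) 1, 0 < φ x) :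
    ∀ x ∈ Ioo (-1 : ℝ) 1, φ' x < 0 := by
  have hnonpos : ∀ x ∈ Ioo (-1 : ℝ) 1, φ' x ≤ 0 := fun x hx =>
    hanti.hasDerivAt_nonpos isOpen_Ioo hx (hd1 x hx)
  intro x hx
  refine (hnonpos x hx).lt_of_ne fun hx0 => ?_
  have hmax : IsLocalMax φ' x :=
    Filter.mem_of_superset (isOpen_Ioo.mem_nhds hx) fun y hy => hx0 ▸ hnonpos y hy
  have h2 := hmax.hasDerivAt_eq_zero (hd2 x hx)
  have := hode x hx
  rw [h2, hx0] at this
  nlinarith [hpos x hx]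

theorem strictAntiOn_forcing_mul_integratingFactor (hlam : 0 < lam) (hmu : mu ≠ 0)
    (halp : 0 < alp) (hd1 : ∀ x ∈ Ioo (-1 : ℝ) 1, HasDerivAt φ (φ' x) x)
    (hd2 : ∀ x ∈ Ioo (-1 : ℝ) 1, HasDerivAt φ' (φ'' x) x)
    (hode : ∀ x ∈ Ioo (-1 : ℝ) 1,
      mu ^ 2 / 2 * (1 - x ^ 2) ^ 2 * φ'' x - 2 * lam * x * φ' x - alp * φ x = 0)
    (hneg : ∀ x ∈ Ioo (-1 : ℝ) 1, φ' x < 0) :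
    StrictAntiOn (fun y => forcing lam alp φ φ' y * integratingFactor lam mu y)
      (Ioo (-1 : ℝ) 1) := by
  have hv : ∀ x ∈ Ioo (-1 : ℝ) 1, HasDerivAt
      (fun y => forcing lam alp φ φ' y * integratingFactor lam mu y)
      ((2 * lam + alp) * φ' x * integratingFactor lam mu x) x := fun x hx =>
    hasDerivAt_forcing_mul_integratingFactor hmu (one_sub_sq_pos_of_mem_Ioo hx).ne'
      (hd1 x hx) (hd2 x hx) (hode x hx)
  refine strictAntiOn_of_hasDerivWithinAt_neg
    (f' := fun x => (2 * lam + alp) * φ' x * integratingFactor lam mu x) (convex_Ioo _ _)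
    (fun x hx => (hv x hx).continuousAt.continuousWithinAt) ?_ ?_ <;> rw [interior_Ioo]
  · exact fun x hx => (hv x hx).hasDerivWithinAt
  · exact fun x hx => mul_neg_of_neg_of_pos
      (mul_neg_of_pos_of_neg (by positivity) (hneg x hx)) (integratingFactor_pos _ _ _)

theorem sq_mul_deriv2_le_of_forcing_le (hmu : 0 < mu) {c x : ℝ} (hc : c < 0)
    (hx : x ∈ Ioo (-1 : ℝ) 1)
    (hode : mu ^ 2 / 2 * (1 - x ^ 2) ^ 2 * φ'' x - 2 * lam * x * φ' x - alp * φ x = 0)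
    (hw : forcing lam alp φ φ' x ≤ c) :
    (1 - x) ^ 2 * φ'' x ≤ c / (2 * mu ^ 2) := by
  simp only [forcing] at hw
  have hmu2 : 0 < mu ^ 2 := by positivity
  have hq : 0 < (1 - x) ^ 2 := pow_pos (by linarith [hx.2]) 2
  have hφ'' : φ'' x < 0 := by
    by_contra! h
    nlinarith [mul_nonneg (mul_nonneg hmu2.le (sq_nonneg (1 - x ^ 2))) h]
  -- `(1 - x²)² = (1 - x)² (1 + x)²` with `(1 + x)² < 4`
  have h4 : 2 * mu ^ 2 * ((1 - x) ^ 2 * φ'' x) ≤ c := by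
    nlinarith [mul_nonneg (mul_nonneg hmu2.le hq.le) (neg_nonneg.2 hφ''.le),
      mul_pos (add_pos_of_pos_of_nonneg (by linarith [hx.1] : (0:ℝ) < 1 + x) zero_le_two)
        (by linarith [hx.2] : (0:ℝ) < 1 - x)]
  rw [le_div_iff₀ (by positivity)]
  linarith

theorem forcing_pos (hlam : 0 < lam) (hmu : 0 < mu) (halp : 0 < alp)
    (hd1 : ∀ x ∈ Ioo (-1 : ℝ) 1, HasDerivAt φ (φ' x) x)
    (hd2 : ∀ x ∈ Ioo (-1 : ℝ) 1, HasDerivAt φ' (φ'' x) x)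
    (hode : ∀ x ∈ Ioo (-1 : ℝ) 1,
      mu ^ 2 / 2 * (1 - x ^ 2) ^ 2 * φ'' x - 2 * lam * x * φ' x - alp * φ x = 0)
    (hanti : AntitoneOn φ (Ioo (-1 : ℝ) 1)) (hpos : ∀ x ∈ Ioo (-1 : ℝ) 1, 0 < φ x) :
    ∀ x ∈ Ioo (-1 : ℝ) 1, 0 < forcing lam alp φ φ' x := by
  intro x₁ hx₁
  by_contra! hw₁
  set v := fun y => forcing lam alp φ φ' y * integratingFactor lam mu y
  have hv : StrictAntiOn v (Ioo (-1 : ℝ) 1) :=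
    strictAntiOn_forcing_mul_integratingFactor hlam hmu.ne' halp hd1 hd2 hode
      (deriv_neg_of_ode halp hd1 hd2 hode hanti hpos)
  obtain ⟨x₂, hx₁₂, hx₂1⟩ := exists_between hx₁.2
  have hx₂ : x₂ ∈ Ioo (-1 : ℝ) 1 := ⟨hx₁.1.trans hx₁₂, hx₂1⟩
  have hsub : Ioo x₂ 1 ⊆ Ioo (-1 : ℝ) 1 := fun x hx => ⟨hx₂.1.trans hx.1, hx.2⟩
  have hc : v x₂ < 0 := (hv hx₁ hx₂ hx₁₂).trans_le
    (mul_nonpos_of_nonpos_of_nonneg hw₁ (integratingFactor_pos _ _ _).le)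
  have hw : ∀ x ∈ Ioo x₂ 1, forcing lam alp φ φ' x ≤ v x₂ := fun x hx => by
    have hvx : v x < v x₂ := hv hx₂ (hsub hx) hx.1
    have hE0 := integratingFactor_pos lam mu x
    have hE1 := integratingFactor_le_one (mu := mu) hlam.le (hsub hx)
    simp only [v] at hvx ⊢
    nlinarith
  have hlim : Tendsto φ (𝓝[<] 1) atBot :=
    tendsto_atBot_of_sq_mul_deriv2_le_neg hx₂1 (div_neg_of_neg_of_pos hc (by positivity))
      (fun x hx => hd1 x (hsub hx)) (fun x hx => hd2 x (hsub hx))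
      fun x hx => sq_mul_deriv2_le_of_forcing_le hmu hc (hsub hx) (hode x (hsub hx)) (hw x hx)
  obtain ⟨x, hφx, hx⟩ :=
    ((hlim.eventually (eventually_lt_atBot 0)).and (Ioo_mem_nhdsLT hx₂1)).exists
  exact (hpos x (hsub hx)).not_gt hφx

end DegenerateODE

/-- A nonincreasing strictly positive solution `φ` of `Lφ = 0` is strictly convex
on `(−1,1)`. -/
theorem stmt3 (lam mu alp : ℝ) (hlam : 0 < lam) (hmu : 0 < mu) (halp : 0 < alp)
    (φ φ' φ'' : ℝ → ℝ)
    (hd1 : ∀ x ∈ Set.Ioo (-1 : ℝ) 1, HasDerivAt φ (φ' x) x)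
    (hd2 : ∀ x ∈ Set.Ioo (-1 : ℝ) 1, HasDerivAt φ' (φ'' x) x)
    (hode : ∀ x ∈ Set.Ioo (-1 : ℝ) 1,
      mu ^ 2 / 2 * (1 - x ^ 2) ^ 2 * φ'' x - 2 * lam * x * φ' x - alp * φ x = 0)
    (hanti : AntitoneOn φ (Set.Ioo (-1 : ℝ) 1))
    (hpos : ∀ x ∈ Set.Ioo (-1 : ℝ) 1, 0 < φ x) :
    StrictConvexOn ℝ (Set.Ioo (-1 : ℝ) 1) φ := by
  refine strictConvexOn_of_hasDerivAt2_pos (convex_Ioo _ _) isOpen_Ioo hd1 hd2 fun x hx => ?_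
  have hw := DegenerateODE.forcing_pos hlam hmu halp hd1 hd2 hode hanti hpos x hx
  have hcoef : 0 < mu ^ 2 / 2 * (1 - x ^ 2) ^ 2 := by
    have := one_sub_sq_pos_of_mem_Ioo hx
    positivity
  have := hode x hx
  simp only [DegenerateODE.forcing] at hw
  exact pos_of_mul_pos_right (by linarith) hcoef.le
end

section
/- Let f : (−1,0] → ℝ be a C¹ function with f ≤ 0 satisfying the Riccati equation f'(x) + f(x)² = 2(α + 2λx f(x))/(μ²(1−x²)²) on (−1,0]. Then f is unbounded below near −1, i.e., liminf_{x→−1⁺} f(x) = −∞. -/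
open Set Filter Topology

/-!
Suppose `C ≤ f ≤ 0` near `-1`. Then `f² ≤ C²`, while the right-hand side of the Riccati
equation is at least `2α / (μ²(1-x²)²) ≥ K / (1+x)²` with `K = α / (2μ²)`, because `x f ≥ 0`
and `(1-x)² ≤ 4`. Hence `f' ≥ K / (1+x)² - C²`, so `f + K / (1+x) + C² x` is nondecreasing
and `f(x) ≤ const - K / (1+x) → -∞`, contradicting `f ≥ C`.
-/

theorem tendsto_atBot_of_div_sq_sub_le_deriv {f f' : ℝ → ℝ} {a k c : ℝ} (hk : 0 < k)
    (h : ∀ᶠ x in 𝓝[>] a, HasDerivAt f (f' x) x ∧ k / (x - a) ^ 2 - c ≤ f' x) :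
    Tendsto f (𝓝[>] a) atBot := by
  obtain ⟨b, hab, hderiv⟩ := mem_nhdsGT_iff_exists_Ioo_subset.1 h
  set g : ℝ → ℝ := fun x => f x + k * (x - a)⁻¹ + c * x
  have hg : ∀ x ∈ Ioo a b, HasDerivAt g (f' x - k / (x - a) ^ 2 + c) x := by
    intro x hx
    have hxa : x - a ≠ 0 := sub_ne_zero.2 hx.1.ne'
    refine (((hderiv hx).1.add ((((hasDerivAt_id x).sub_const a).inv hxa).const_mul k)).add
      ((hasDerivAt_id x).const_mul c)).congr_deriv ?_
    simp only [id]
    ring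
  have hmono : MonotoneOn g (Ioo a b) := by
    refine monotoneOn_of_hasDerivWithinAt_nonneg (f' := fun x => f' x - k / (x - a) ^ 2 + c)
      (convex_Ioo a b)
      (fun x hx => (hg x hx).continuousAt.continuousWithinAt) (fun x hx => ?_) (fun x hx => ?_)
    · rw [interior_Ioo] at hx ⊢
      exact (hg x hx).hasDerivWithinAt
    · rw [interior_Ioo] at hx
      linarith [(hderiv hx).2]
  obtain ⟨m, ham, hmb⟩ := exists_between (mem_Ioi.1 hab)
  have hm : m ∈ Ioo a b := ⟨ham, hmb⟩
  have hbound : ∀ x ∈ Ioo a m, f x ≤ g m - c * x + -(k * (x - a)⁻¹) := by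
    intro x hx
    have := hmono ⟨hx.1, hx.2.trans hm.2⟩ hm hx.2.le
    simp only [g] at this
    linarith
  refine tendsto_atBot_mono' _ (mem_of_superset (Ioo_mem_nhdsGT hm.1) hbound) ?_
  refine Tendsto.add_atBot (C := g m - c * a) ?_ ?_
  · exact ((by fun_prop : Continuous fun x : ℝ => g m - c * x).tendsto a).mono_left
      nhdsWithin_le_nhds
  · have hsub0 : Tendsto (· - a) (𝓝[>] a) (𝓝[>] 0) := by
      have hcont := (continuous_sub_right a).continuousWithinAt (s := Ioi a) (x := a)
      simpa using hcont.tendsto_nhdsWithin (t := Ioi 0) fun x hx => sub_pos.2 hx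
    exact tendsto_neg_atTop_atBot.comp
      ((tendsto_inv_nhdsGT_zero.comp hsub0).const_mul_atTop hk)

theorem div_add_one_sq_le_riccati_rhs {lam mu alp x y : ℝ} (hlam : 0 ≤ lam) (hmu : mu ≠ 0)
    (halp : 0 ≤ alp) (hx : x ∈ Ioc (-1) 0) (hy : y ≤ 0) :
    alp / (2 * mu ^ 2) / (x + 1) ^ 2 ≤
      2 * (alp + 2 * lam * x * y) / (mu ^ 2 * (1 - x ^ 2) ^ 2) := by
  obtain ⟨hx1, hx0⟩ := hx
  have hxy : 0 ≤ lam * x * y :=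
    mul_nonneg_of_nonpos_of_nonpos (mul_nonpos_of_nonneg_of_nonpos hlam hx0) hy
  calc alp / (2 * mu ^ 2) / (x + 1) ^ 2 = 2 * alp / (mu ^ 2 * (4 * (x + 1) ^ 2)) := by
        field_simp; ring
    _ ≤ 2 * alp / (mu ^ 2 * (1 - x ^ 2) ^ 2) := by
        gcongr
        · have : 0 < 1 - x ^ 2 := by nlinarith
          positivity
        · have hx2 : (1 - x) ^ 2 ≤ 4 := by nlinarith
          calc (1 - x ^ 2) ^ 2 = (1 - x) ^ 2 * (x + 1) ^ 2 := by ring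
            _ ≤ 4 * (x + 1) ^ 2 := by gcongr
    _ ≤ 2 * (alp + 2 * lam * x * y) / (mu ^ 2 * (1 - x ^ 2) ^ 2) := by
        gcongr
        linarith

/-- A nonpositive `C¹` solution of the Riccati equation
`f' + f² = 2(α + 2λx f)/(μ²(1−x²)²)` on `(−1,0]` is unbounded below near `−1`:
`liminf_{x→−1⁺} f(x) = −∞`, stated as: for every `C` we frequently have `f x < C`
as `x → −1⁺`. -/
theorem stmt8 (lam mu alp : ℝ) (hlam : 0 < lam) (hmu : 0 < mu) (halp : 0 < alp)
    (f f' : ℝ → ℝ)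
    (hd : ∀ x ∈ Set.Ioc (-1 : ℝ) 0, HasDerivAt f (f' x) x)
    (hneg : ∀ x ∈ Set.Ioc (-1 : ℝ) 0, f x ≤ 0)
    (hric : ∀ x ∈ Set.Ioc (-1 : ℝ) 0,
      f' x + (f x) ^ 2 = 2 * (alp + 2 * lam * x * f x) / (mu ^ 2 * (1 - x ^ 2) ^ 2)) :
    ∀ C : ℝ, ∃ᶠ x in nhdsWithin (-1 : ℝ) (Set.Ioi (-1 : ℝ)), f x < C := by
  intro C
  by_contra hfreq
  have hge : ∀ᶠ x in 𝓝[>] (-1 : ℝ), C ≤ f x := by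
    simpa only [not_frequently, not_lt] using hfreq
  have hderiv : ∀ᶠ x in 𝓝[>] (-1 : ℝ),
      HasDerivAt f (f' x) x ∧ alp / (2 * mu ^ 2) / (x - -1) ^ 2 - C ^ 2 ≤ f' x := by
    filter_upwards [hge, Ioc_mem_nhdsGT neg_one_lt_zero] with x hCx hx
    have hsq : f x ^ 2 ≤ C ^ 2 := by nlinarith [hneg x hx]
    rw [sub_neg_eq_add]
    exact ⟨hd x hx, by linarith [hric x hx,
      div_add_one_sq_le_riccati_rhs hlam.le hmu.ne' halp.le hx (hneg x hx)]⟩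
  have hbot := tendsto_atBot_of_div_sq_sub_le_deriv (by positivity) hderiv
  obtain ⟨x, hlt, hle⟩ := ((hbot.eventually (eventually_lt_atBot C)).and hge).exists
  exact (hle.trans_lt hlt).false
end

section
/- Let φ : (−1,1) → ℝ be a C² solution of Lφ = 0 that is nonincreasing and strictly positive, and let K > 0. Define g(x) = V(x) − V(−x) where V(x) = Ṽ(x) − Kφ(x) and Ṽ(x) = 1/(2α) − x/(2(2λ+α)). Then g''(x) < 0 for all x ∈ (−1,0), and g''(x) > 0 for all x ∈ (0,1). -/
/-!
Since `Ṽ(x) - Ṽ(-x)` is affine, `g'' = K (φ''(-x) - φ''(x))`, so both claims reduce to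
`φ''(-x) < φ''(x)` for `x ∈ (-1, 0)`. The leading coefficient `μ²(1-x²)²/2` of the equation is even,
so subtracting the equations at `x` and `-x` gives
`μ²(1-x²)²/2 · (φ''(x) - φ''(-x)) = 2λx (φ'(x) + φ'(-x)) + α (φ(x) - φ(-x))`.
For `x < 0` the drift term is `≥ 0` because `φ' ≤ 0`, and the last term is `> 0` because `φ` is
strictly decreasing: were `φ` constant near a point, the equation there would force `α φ = 0`.
-/

open Set Filter Topology

theorem HasDerivAt.nonpos_of_antitoneOn_of_mem_nhds {f : ℝ → ℝ} {f' x : ℝ} {s : Set ℝ}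
    (hd : HasDerivAt f f' x) (hf : AntitoneOn f s) (hs : s ∈ 𝓝 x) : f' ≤ 0 :=
  hd.hasDerivWithinAt.nonpos_of_antitoneOn
    (by simpa using (PerfectSpace.univ_preperfect x (mem_univ x)).nhds_inter hs) hf

theorem AntitoneOn.strictAntiOn_of_forall_not_eventuallyEq {α β : Type*} [LinearOrder α]
    [TopologicalSpace α] [OrderTopology α] [DenselyOrdered α] [PartialOrder β] {f : α → β}
    {s : Set α} [hs : s.OrdConnected] (hf : AntitoneOn f s)
    (h : ∀ t ∈ s, ∀ c, ¬ f =ᶠ[𝓝 t] fun _ => c) : StrictAntiOn f s := by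
  intro a ha b hb hab
  refine lt_of_le_of_ne (hf ha hb hab.le) fun hba => ?_
  obtain ⟨m, ham, hmb⟩ := exists_between hab
  refine h m (hs.out ha hb ⟨ham.le, hmb.le⟩) (f a) ?_
  filter_upwards [Ioo_mem_nhds ham hmb] with y hy
  have hys : y ∈ s := hs.out ha hb (Ioo_subset_Icc_self hy)
  exact le_antisymm (hf ha hys hy.1.le) (hba ▸ hf hys hb hy.2.le)

theorem derivs_eq_zero_of_eventuallyEq_const {f f' : ℝ → ℝ} {f'' t c : ℝ}
    (hd1 : ∀ᶠ y in 𝓝 t, HasDerivAt f (f' y) y) (hd2 : HasDerivAt f' f'' t)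
    (hc : f =ᶠ[𝓝 t] fun _ => c) : f' t = 0 ∧ f'' = 0 := by
  have hf' : f' =ᶠ[𝓝 t] fun _ => 0 := by
    filter_upwards [hd1, hc.eventuallyEq_nhds] with y hy hcy
    exact hy.unique ((hasDerivAt_const y c).congr_of_eventuallyEq hcy)
  exact ⟨hf'.eq_of_nhds, hd2.unique ((hasDerivAt_const t 0).congr_of_eventuallyEq hf')⟩

theorem hasDerivAt_comp_neg {f : ℝ → ℝ} {f' x : ℝ} (hf : HasDerivAt f f' (-x)) :
    HasDerivAt (fun y => f (-y)) (-f') x :=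
  (hf.comp x (hasDerivAt_neg x)).congr_deriv (by ring)

theorem hasDerivAt_deriv_of_eventually_hasDerivAt {f f' : ℝ → ℝ} {f'' x : ℝ}
    (hd1 : ∀ᶠ y in 𝓝 x, HasDerivAt f (f' y) y) (hd2 : HasDerivAt f' f'' x) :
    HasDerivAt (deriv f) f'' x :=
  hd2.congr_of_eventuallyEq (hd1.mono fun _ hy => hy.deriv)

theorem deriv_deriv_mul_add_mul_sub_comp_neg {f f' f'' : ℝ → ℝ} {s : Set ℝ} (hs : IsOpen s)
    (hneg : ∀ x ∈ s, -x ∈ s) (hd1 : ∀ x ∈ s, HasDerivAt f (f' x) x)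
    (hd2 : ∀ x ∈ s, HasDerivAt f' (f'' x) x) (b K : ℝ) {x : ℝ} (hx : x ∈ s) :
    deriv (deriv fun y => b * y + K * (f (-y) - f y)) x = K * (f'' (-x) - f'' x) := by
  have hfirst : ∀ y ∈ s,
      HasDerivAt (fun y => b * y + K * (f (-y) - f y)) (b + K * (-f' (-y) - f' y)) y := by
    intro y hy
    exact (((hasDerivAt_id y).const_mul b).add
      (((hasDerivAt_comp_neg (hd1 (-y) (hneg y hy))).sub (hd1 y hy)).const_mul K)).congr_deriv
      (by simp)
  have hsecond : HasDerivAt (fun y => b + K * (-f' (-y) - f' y)) (K * (f'' (-x) - f'' x)) x :=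
    (((hasDerivAt_comp_neg (hd2 (-x) (hneg x hx))).neg.sub (hd2 x hx)).const_mul K
      |>.const_add b).congr_deriv (by ring)
  exact (hasDerivAt_deriv_of_eventually_hasDerivAt
    (eventually_of_mem (hs.mem_nhds hx) hfirst) hsecond).deriv

section OdeSolution

variable {lam mu alp : ℝ} {φ φ' φ'' : ℝ → ℝ}

theorem not_eventuallyEq_const_of_ode (halp : 0 < alp)
    (hd1 : ∀ x ∈ Ioo (-1 : ℝ) 1, HasDerivAt φ (φ' x) x)
    (hd2 : ∀ x ∈ Ioo (-1 : ℝ) 1, HasDerivAt φ' (φ'' x) x)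
    (hode : ∀ x ∈ Ioo (-1 : ℝ) 1,
      mu ^ 2 / 2 * (1 - x ^ 2) ^ 2 * φ'' x - 2 * lam * x * φ' x - alp * φ x = 0)
    (hpos : ∀ x ∈ Ioo (-1 : ℝ) 1, 0 < φ x) {t : ℝ} (ht : t ∈ Ioo (-1 : ℝ) 1) (c : ℝ) :
    ¬ φ =ᶠ[𝓝 t] fun _ => c := by
  intro hc
  obtain ⟨hφ', hφ''⟩ := derivs_eq_zero_of_eventuallyEq_const
    (eventually_of_mem (Ioo_mem_nhds ht.1 ht.2) hd1) (hd2 t ht) hc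
  have h := hode t ht
  rw [hφ', hφ''] at h
  nlinarith [hpos t ht]

theorem second_deriv_neg_lt_of_ode {x : ℝ} (hlam : 0 ≤ lam) (hmu : mu ≠ 0) (halp : 0 < alp)
    (hode : ∀ x ∈ Ioo (-1 : ℝ) 1,
      mu ^ 2 / 2 * (1 - x ^ 2) ^ 2 * φ'' x - 2 * lam * x * φ' x - alp * φ x = 0)
    (hx : x ∈ Ioo (-1 : ℝ) 0) (hφ' : φ' x ≤ 0) (hφ'_neg : φ' (-x) ≤ 0) (hφ : φ (-x) < φ x) :
    φ'' (-x) < φ'' x := by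
  have hx' : x ∈ Ioo (-1 : ℝ) 1 := ⟨hx.1, hx.2.trans one_pos⟩
  have hD : 0 < mu ^ 2 / 2 * (1 - x ^ 2) ^ 2 := by
    have : 0 < 1 - x ^ 2 := by nlinarith [hx.1, hx.2]
    positivity
  have hdiff : mu ^ 2 / 2 * (1 - x ^ 2) ^ 2 * (φ'' x - φ'' (-x))
      = 2 * lam * x * (φ' x + φ' (-x)) + alp * (φ x - φ (-x)) := by
    linear_combination hode x hx' - hode (-x) (neg_mem_Ioo_iff.mpr (by simpa using hx'))
  have hdrift : 0 ≤ 2 * lam * x * (φ' x + φ' (-x)) :=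
    mul_nonneg_of_nonpos_of_nonpos (by nlinarith [hx.2]) (by linarith)
  have : 0 < mu ^ 2 / 2 * (1 - x ^ 2) ^ 2 * (φ'' x - φ'' (-x)) := by
    rw [hdiff]
    nlinarith
  exact sub_pos.mp ((mul_pos_iff_of_pos_left hD).mp this)

end OdeSolution

/-- With `V = Ṽ − Kφ` (`K > 0`) and `g(x) = V(x) − V(−x)`, one has `g'' < 0` on
`(−1,0)` and `g'' > 0` on `(0,1)`. -/
theorem stmt9 (lam mu alp K : ℝ) (hlam : 0 < lam) (hmu : 0 < mu) (halp : 0 < alp)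
    (hK : 0 < K)
    (φ φ' φ'' : ℝ → ℝ)
    (hd1 : ∀ x ∈ Set.Ioo (-1 : ℝ) 1, HasDerivAt φ (φ' x) x)
    (hd2 : ∀ x ∈ Set.Ioo (-1 : ℝ) 1, HasDerivAt φ' (φ'' x) x)
    (hode : ∀ x ∈ Set.Ioo (-1 : ℝ) 1,
      mu ^ 2 / 2 * (1 - x ^ 2) ^ 2 * φ'' x - 2 * lam * x * φ' x - alp * φ x = 0)
    (hanti : AntitoneOn φ (Set.Ioo (-1 : ℝ) 1))
    (hpos : ∀ x ∈ Set.Ioo (-1 : ℝ) 1, 0 < φ x)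
    (g : ℝ → ℝ)
    (hg : g = fun x => ((1 / (2 * alp) - x / (2 * (2 * lam + alp))) - K * φ x)
      - ((1 / (2 * alp) - (-x) / (2 * (2 * lam + alp))) - K * φ (-x))) :
    (∀ x ∈ Set.Ioo (-1 : ℝ) 0, deriv (deriv g) x < 0)
      ∧ (∀ x ∈ Set.Ioo (0 : ℝ) 1, 0 < deriv (deriv g) x) := by
  have hneg : ∀ x ∈ Ioo (-1 : ℝ) 1, -x ∈ Ioo (-1 : ℝ) 1 := fun x hx =>
    neg_mem_Ioo_iff.mpr (by simpa using hx)
  have hφ'_nonpos : ∀ x ∈ Ioo (-1 : ℝ) 1, φ' x ≤ 0 := fun x hx =>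
    (hd1 x hx).nonpos_of_antitoneOn_of_mem_nhds hanti (Ioo_mem_nhds hx.1 hx.2)
  have hstrict : StrictAntiOn φ (Ioo (-1 : ℝ) 1) :=
    hanti.strictAntiOn_of_forall_not_eventuallyEq fun t ht =>
      not_eventuallyEq_const_of_ode halp hd1 hd2 hode hpos ht
  have hcomp : ∀ x ∈ Ioo (-1 : ℝ) 0, φ'' (-x) < φ'' x := fun x hx =>
    have hx' : x ∈ Ioo (-1 : ℝ) 1 := ⟨hx.1, hx.2.trans one_pos⟩
    second_deriv_neg_lt_of_ode hlam.le hmu.ne' halp hode hx (hφ'_nonpos x hx') (hφ'_nonpos (-x) (hneg x hx'))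
      (hstrict hx' (hneg x hx') (by linarith [hx.2]))
  have hg_odd : g = fun y => -(2 * lam + alp)⁻¹ * y + K * (φ (-y) - φ y) := by
    have : 2 * lam + alp ≠ 0 := by positivity
    rw [hg]
    funext y
    field_simp
    ring
  have hg'' : ∀ x ∈ Ioo (-1 : ℝ) 1, deriv (deriv g) x = K * (φ'' (-x) - φ'' x) := fun x hx =>
    hg_odd ▸ deriv_deriv_mul_add_mul_sub_comp_neg isOpen_Ioo hneg hd1 hd2 _ K hx
  refine ⟨fun x hx => ?_, fun x hx => ?_⟩
  · rw [hg'' x ⟨hx.1, hx.2.trans one_pos⟩]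
    exact mul_neg_of_pos_of_neg hK (sub_neg.mpr (hcomp x hx))
  · rw [hg'' x ⟨neg_one_lt_zero.trans hx.1, hx.2⟩]
    have := hcomp (-x) (neg_mem_Ioo_iff.mpr (by simpa using hx))
    rw [neg_neg] at this
    exact mul_pos hK (sub_pos.mpr this)
end

section
/- With p(x) = ∫₀ˣ exp((2λ/μ²)·1/(1−y²)) dy for x ∈ (−1,1), we have lim_{x→1⁻} p(x) = +∞ and lim_{x→−1⁺} p(x) = −∞. -/
open Set Filter

lemma aux_cont (c : ℝ) {s : Set ℝ} (hs : ∀ y ∈ s, y ^ 2 ≠ 1) :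
    ContinuousOn (fun y : ℝ => Real.exp (c * (1 / (1 - y ^ 2)))) s := by
  apply Real.continuous_exp.comp_continuousOn
  apply continuousOn_const.mul
  apply continuousOn_const.div (continuousOn_const.sub (continuousOn_pow 2))
  intro y hy
  have := hs y hy
  intro h
  apply this
  linarith [sub_eq_zero.mp h]

lemma aux_tendsto (c : ℝ) (hc : 0 < c) :
    Tendsto (fun x : ℝ => ∫ y in (0:ℝ)..x, Real.exp (c * (1 / (1 - y ^ 2))))
      (nhdsWithin 1 (Iio 1)) atTop := by
  set f : ℝ → ℝ := fun y => Real.exp (c * (1 / (1 - y ^ 2))) with hf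
  have key : ∀ x : ℝ, 0 ≤ x → x < 1 →
      c / 2 * (- Real.log (1 - x)) ≤ ∫ y in (0:ℝ)..x, f y := by
    intro x hx0 hx1
    have hfi : IntervalIntegrable f MeasureTheory.volume 0 x := by
      apply ContinuousOn.intervalIntegrable
      apply aux_cont
      intro y hy
      rw [uIcc_of_le hx0] at hy
      have h1 : y < 1 := lt_of_le_of_lt hy.2 hx1
      nlinarith [hy.1]
    have hgi : IntervalIntegrable (fun y => c / 2 * (1 / (1 - y))) MeasureTheory.volume 0 x := by
      apply ContinuousOn.intervalIntegrable
      apply continuousOn_const.mul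
      apply continuousOn_const.div (continuousOn_const.sub (continuousOn_id))
      intro y hy
      rw [uIcc_of_le hx0] at hy
      have h1 : y < 1 := lt_of_le_of_lt hy.2 hx1
      intro h; simp at h; linarith [sub_eq_zero.mp h]
    have hmono : ∀ y ∈ Icc (0:ℝ) x, c / 2 * (1 / (1 - y)) ≤ f y := by
      intro y hy
      have hy1 : y < 1 := lt_of_le_of_lt hy.2 hx1
      have h1y : 0 < 1 - y := by linarith
      have h1y2 : 0 < 1 - y ^ 2 := by nlinarith [hy.1]
      have e1 : c / 2 * (1 / (1 - y)) = c / (2 * (1 - y)) := by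
        rw [mul_one_div, div_div]
      have e2 : c * (1 / (1 - y ^ 2)) = c / (1 - y ^ 2) := by ring
      have hle : c / 2 * (1 / (1 - y)) ≤ c * (1 / (1 - y ^ 2)) := by
        rw [e1, e2]
        apply div_le_div_of_nonneg_left hc.le h1y2
        nlinarith [hy.1]
      have := Real.add_one_le_exp (c * (1 / (1 - y ^ 2)))
      simp only [hf]
      linarith
    have h1 : (∫ y in (0:ℝ)..x, c / 2 * (1 / (1 - y)))
        = c / 2 * (- Real.log (1 - x)) := by
      rw [intervalIntegral.integral_const_mul]
      congr 1
      have := intervalIntegral.integral_comp_sub_left (a := (0:ℝ)) (b := x)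
        (fun u => 1 / u) 1
      simp only [sub_zero] at this
      rw [this, integral_one_div, Real.log_div one_ne_zero (by linarith), Real.log_one]
      · ring
      · intro h
        rw [uIcc_of_le (by linarith)] at h
        linarith [h.1]
    calc c / 2 * (- Real.log (1 - x)) = ∫ y in (0:ℝ)..x, c / 2 * (1 / (1 - y)) := h1.symm
      _ ≤ ∫ y in (0:ℝ)..x, f y := intervalIntegral.integral_mono_on hx0 hgi hfi hmono
  have hlb : Tendsto (fun x : ℝ => c / 2 * (- Real.log (1 - x)))
      (nhdsWithin 1 (Iio 1)) atTop := by
    apply Tendsto.const_mul_atTop (by positivity : (0:ℝ) < c / 2)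
    have h1 : Tendsto (fun x : ℝ => 1 - x) (nhdsWithin 1 (Iio 1)) (nhdsWithin 0 (Ioi 0)) := by
      apply tendsto_nhdsWithin_of_tendsto_nhds_of_eventually_within _
      · have h : Tendsto (fun x : ℝ => 1 - x) (nhds 1) (nhds 0) := by
          simpa using (continuous_sub_left (1:ℝ)).tendsto 1
        exact h.mono_left nhdsWithin_le_nhds
      · filter_upwards [self_mem_nhdsWithin] with x hx
        simp only [mem_Ioi]
        exact sub_pos.mpr hx
    have h2 : Tendsto Real.log (nhdsWithin 0 (Ioi 0)) atBot :=
      Real.tendsto_log_nhdsGT_zero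
    exact tendsto_neg_atBot_atTop.comp (h2.comp h1)
  apply tendsto_atTop_mono' _ _ hlb
  have hmem : Ioo (0:ℝ) 1 ∈ nhdsWithin (1:ℝ) (Iio 1) := by
    apply mem_nhdsWithin.mpr
    exact ⟨Ioi 0, isOpen_Ioi, by norm_num, by intro y hy; exact ⟨hy.1, hy.2⟩⟩
  filter_upwards [hmem] with x hx
  exact key x hx.1.le hx.2

/-- The scale function `p(x) = ∫₀ˣ exp((2λ/μ²)·1/(1−y²)) dy` satisfies
`p(x) → +∞` as `x → 1⁻` and `p(x) → −∞` as `x → −1⁺`. -/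
theorem stmt11 (lam mu : ℝ) (hlam : 0 < lam) (hmu : 0 < mu) :
    Filter.Tendsto (fun x : ℝ => ∫ y in (0 : ℝ)..x, Real.exp (2 * lam / mu ^ 2 * (1 / (1 - y ^ 2))))
        (nhdsWithin 1 (Set.Iio 1)) Filter.atTop
      ∧ Filter.Tendsto (fun x : ℝ => ∫ y in (0 : ℝ)..x, Real.exp (2 * lam / mu ^ 2 * (1 / (1 - y ^ 2))))
        (nhdsWithin (-1) (Set.Ioi (-1))) Filter.atBot := by
  have hc : 0 < 2 * lam / mu ^ 2 := by positivity
  have htop := aux_tendsto (2 * lam / mu ^ 2) hc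
  refine ⟨htop, ?_⟩
  set c := 2 * lam / mu ^ 2
  set f : ℝ → ℝ := fun y => Real.exp (c * (1 / (1 - y ^ 2))) with hfdef
  have hodd : ∀ x : ℝ, (∫ y in (0:ℝ)..x, f y) = -∫ y in (0:ℝ)..(-x), f y := by
    intro x
    calc (∫ y in (0:ℝ)..x, f y) = ∫ y in (0:ℝ)..x, f (-y) := by
          apply intervalIntegral.integral_congr
          intro y _
          simp [hfdef]
      _ = ∫ y in (-x)..(0:ℝ), f y := by
          have h := intervalIntegral.integral_comp_neg (a := (0:ℝ)) (b := x) f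
          rwa [neg_zero] at h
      _ = -∫ y in (0:ℝ)..(-x), f y := intervalIntegral.integral_symm 0 (-x)
  have hneg : Tendsto (fun x : ℝ => -x) (nhdsWithin (-1) (Ioi (-1))) (nhdsWithin 1 (Iio 1)) := by
    apply tendsto_nhdsWithin_of_tendsto_nhds_of_eventually_within _
    · have h : Tendsto (fun x : ℝ => -x) (nhds (-1)) (nhds 1) := by
        simpa using (continuous_neg (G := ℝ)).tendsto (-1)
      exact h.mono_left nhdsWithin_le_nhds
    · filter_upwards [self_mem_nhdsWithin] with x hx
      simp only [mem_Iio]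
      simp only [mem_Ioi] at hx
      linarith
  have hcomp : Tendsto (fun x : ℝ => -∫ y in (0:ℝ)..(-x), f y)
      (nhdsWithin (-1) (Ioi (-1))) atBot :=
    tendsto_neg_atTop_atBot.comp (htop.comp hneg)
  exact hcomp.congr fun x => (hodd x).symm
end

section
/- With p'(x) = exp((2λ/μ²)·1/(1−x²)) and p(x) = ∫₀ˣ p'(y) dy on (−1,1), the limit lim_{x→1⁻} p(x)/(p'(x)(1−x²)²) exists and equals μ²/(4λ). -/
/-!
With `c = 2λ/μ²`, the quotient is `p(x) / g(x)` where `g(x) = p'(x)(1 - x²)²`. Both tend to `+∞`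
as `x → 1⁻`, and `g'(x) = p'(x)(2cx - 4x(1 - x²))`, so `p'/g' → 1/(2c) = μ²/(4λ)`, and the
`∞/∞` form of l'Hôpital's rule gives the claim.
-/

open Set Filter Topology

section LHopitalAtTop

variable {f g f' g' : ℝ → ℝ} {b : ℝ}

/-- `f - M g` is antitone near `b⁻`, hence bounded above by a constant, which is negligible
against `g`. -/
lemma eventually_div_lt_of_le_mul_deriv {M M' : ℝ} (hMM' : M < M')
    (hff' : ∀ᶠ x in 𝓝[<] b, HasDerivAt f (f' x) x)
    (hgg' : ∀ᶠ x in 𝓝[<] b, HasDerivAt g (g' x) x)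
    (hle : ∀ᶠ x in 𝓝[<] b, f' x ≤ M * g' x) (hg : Tendsto g (𝓝[<] b) atTop) :
    ∀ᶠ x in 𝓝[<] b, f x / g x < M' := by
  obtain ⟨l, hlb, hl⟩ := mem_nhdsLT_iff_exists_Ioo_subset.1 (hff'.and (hgg'.and hle))
  obtain ⟨x₀, hlx₀, hx₀b⟩ := exists_between (mem_Iio.1 hlb)
  have hanti : AntitoneOn (fun x => f x - M * g x) (Ioo l b) := by
    have hderiv : ∀ x ∈ Ioo l b, HasDerivAt (fun x => f x - M * g x) (f' x - M * g' x) x :=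
      fun x hx => (hl hx).1.sub ((hl hx).2.1.const_mul M)
    refine antitoneOn_of_hasDerivWithinAt_nonpos (f' := fun x => f' x - M * g' x) (convex_Ioo l b)
      (fun x hx => (hderiv x hx).continuousAt.continuousWithinAt) (fun x hx => ?_) (fun x hx => ?_)
    · rw [interior_Ioo] at hx ⊢
      exact (hderiv x hx).hasDerivWithinAt
    · rw [interior_Ioo] at hx
      linarith [(hl hx).2.2]
  have hC : Tendsto (fun x => (f x₀ - M * g x₀) / g x) (𝓝[<] b) (𝓝 0) :=
    tendsto_const_nhds.div_atTop hg
  filter_upwards [Ioo_mem_nhdsLT hx₀b, hg.eventually_gt_atTop 0,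
    hC.eventually (gt_mem_nhds (sub_pos.2 hMM'))] with x hx hgx hCx
  have hbound := hanti ⟨hlx₀, hx₀b⟩ ⟨hlx₀.trans hx.1, hx.2⟩ hx.1.le
  rw [div_lt_iff₀ hgx] at hCx ⊢
  linarith

theorem lhopital_atTop_nhdsLT {L : ℝ}
    (hff' : ∀ᶠ x in 𝓝[<] b, HasDerivAt f (f' x) x)
    (hgg' : ∀ᶠ x in 𝓝[<] b, HasDerivAt g (g' x) x)
    (hg' : ∀ᶠ x in 𝓝[<] b, 0 < g' x) (hg : Tendsto g (𝓝[<] b) atTop)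
    (hdiv : Tendsto (fun x => f' x / g' x) (𝓝[<] b) (𝓝 L)) :
    Tendsto (fun x => f x / g x) (𝓝[<] b) (𝓝 L) := by
  refine tendsto_order.2 ⟨fun u hu => ?_, fun u hu => ?_⟩
  · obtain ⟨M, huM, hML⟩ := exists_between hu
    have hle : ∀ᶠ x in 𝓝[<] b, -f' x ≤ -M * g' x := by
      filter_upwards [hdiv.eventually (lt_mem_nhds hML), hg'] with x hx hgx
      rw [lt_div_iff₀ hgx] at hx
      linarith
    filter_upwards [eventually_div_lt_of_le_mul_deriv (neg_lt_neg huM)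
      (hff'.mono fun x hx => hx.neg) hgg' hle hg] with x hx
    rw [Pi.neg_apply, neg_div] at hx
    linarith
  · obtain ⟨M, hLM, hMu⟩ := exists_between hu
    refine eventually_div_lt_of_le_mul_deriv hMu hff' hgg' ?_ hg
    filter_upwards [hdiv.eventually (gt_mem_nhds hLM), hg'] with x hx hgx
    exact ((div_lt_iff₀ hgx).1 hx).le

end LHopitalAtTop

lemma tendsto_exp_div_mul_pow_nhdsGT_zero {c : ℝ} (hc : 0 < c) (n : ℕ) :
    Tendsto (fun t => Real.exp (c / t) * t ^ n) (𝓝[>] 0) atTop := by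
  refine ((tendsto_exp_mul_div_rpow_atTop n c hc).comp tendsto_inv_nhdsGT_zero).congr' ?_
  filter_upwards [self_mem_nhdsWithin] with t ht
  simp [div_eq_mul_inv, Real.rpow_natCast, inv_pow]

lemma tendsto_one_sub_sq_nhdsLT_one :
    Tendsto (fun x : ℝ => 1 - x ^ 2) (𝓝[<] 1) (𝓝[>] 0) := by
  refine tendsto_nhdsWithin_iff.2 ⟨?_, ?_⟩
  · have h : Continuous (fun x : ℝ => 1 - x ^ 2) := by fun_prop
    simpa using (h.tendsto 1).mono_left nhdsWithin_le_nhds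
  · filter_upwards [Ioo_mem_nhdsLT (show (0 : ℝ) < 1 by norm_num)] with x hx
    simp only [mem_Ioi, sub_pos]
    nlinarith [hx.1, hx.2]

/-- The derivative `p'` of the scale function, written with `c = 2λ/μ²`. -/
noncomputable def scaleDensity (c y : ℝ) : ℝ := Real.exp (c * (1 / (1 - y ^ 2)))

section ScaleDensity

variable (c : ℝ)

lemma hasDerivAt_scaleDensity {x : ℝ} (hx : 1 - x ^ 2 ≠ 0) :
    HasDerivAt (scaleDensity c) (scaleDensity c x * (c * (2 * x / (1 - x ^ 2) ^ 2))) x := by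
  have h : HasDerivAt (fun y : ℝ => 1 - y ^ 2) (-(2 * x)) x := by
    simpa using (hasDerivAt_pow 2 x).const_sub 1
  convert ((h.inv hx).const_mul c).exp using 1
  · ext y
    simp [scaleDensity, one_div]
  · simp [scaleDensity, one_div]

lemma hasDerivAt_scaleDensity_mul_sq {x : ℝ} (hx : 1 - x ^ 2 ≠ 0) :
    HasDerivAt (fun y => scaleDensity c y * (1 - y ^ 2) ^ 2)
      (scaleDensity c x * (2 * c * x - 4 * x * (1 - x ^ 2))) x := by
  have h : HasDerivAt (fun y : ℝ => 1 - y ^ 2) (-(2 * x)) x := by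
    simpa using (hasDerivAt_pow 2 x).const_sub 1
  have hsq : HasDerivAt (fun y : ℝ => (1 - y ^ 2) ^ 2) (2 * (1 - x ^ 2) * -(2 * x)) x := by
    simpa using h.fun_pow 2
  refine ((hasDerivAt_scaleDensity c hx).fun_mul hsq).congr_deriv ?_
  field_simp
  ring

lemma continuousOn_scaleDensity : ContinuousOn (scaleDensity c) (Ioo (-1) 1) := fun x hx =>
  (hasDerivAt_scaleDensity c (by nlinarith [hx.1, hx.2])).continuousAt.continuousWithinAt

lemma hasDerivAt_integral_scaleDensity {x : ℝ} (hx : x ∈ Ioo (-1) 1) :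
    HasDerivAt (fun x => ∫ y in (0 : ℝ)..x, scaleDensity c y) (scaleDensity c x) x := by
  have hsub : uIcc 0 x ⊆ Ioo (-1) 1 := ordConnected_Ioo.uIcc_subset (by norm_num) hx
  exact intervalIntegral.integral_hasDerivAt_right
    ((continuousOn_scaleDensity c).mono hsub).intervalIntegrable
    ((continuousOn_scaleDensity c).stronglyMeasurableAtFilter isOpen_Ioo x hx)
    ((continuousOn_scaleDensity c).continuousAt (isOpen_Ioo.mem_nhds hx))

variable {c}

lemma tendsto_scaleDensity_mul_sq_nhdsLT_one (hc : 0 < c) :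
    Tendsto (fun x => scaleDensity c x * (1 - x ^ 2) ^ 2) (𝓝[<] 1) atTop :=
  ((tendsto_exp_div_mul_pow_nhdsGT_zero hc 2).comp tendsto_one_sub_sq_nhdsLT_one).congr
    fun x => by simp only [Function.comp_apply, scaleDensity, mul_one_div]

end ScaleDensity

/-- With `p'(x) = exp((2λ/μ²)·1/(1−x²))` and `p(x) = ∫₀ˣ p'(y) dy`,
`lim_{x→1⁻} p(x)/(p'(x)(1−x²)²) = μ²/(4λ)`. -/
theorem stmt12 (lam mu : ℝ) (hlam : 0 < lam) (hmu : 0 < mu) :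
    Filter.Tendsto
      (fun x : ℝ =>
        (∫ y in (0 : ℝ)..x, Real.exp (2 * lam / mu ^ 2 * (1 / (1 - y ^ 2))))
          / (Real.exp (2 * lam / mu ^ 2 * (1 / (1 - x ^ 2))) * (1 - x ^ 2) ^ 2))
      (nhdsWithin 1 (Set.Iio 1)) (nhds (mu ^ 2 / (4 * lam))) := by
  set c := 2 * lam / mu ^ 2 with hc_def
  have hc : 0 < c := by positivity
  have hlimit : mu ^ 2 / (4 * lam) = (2 * c)⁻¹ := by
    rw [hc_def]; field_simp; ring
  set q : ℝ → ℝ := fun x => 2 * c * x - 4 * x * (1 - x ^ 2)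
  have hq : Tendsto q (𝓝[<] 1) (𝓝 (2 * c)) := by
    have h : Continuous q := by fun_prop
    simpa [q] using (h.tendsto 1).mono_left nhdsWithin_le_nhds
  have hq_pos : ∀ᶠ x in 𝓝[<] 1, 0 < q x := hq.eventually (lt_mem_nhds (by positivity))
  have hmem : ∀ᶠ x in 𝓝[<] (1 : ℝ), x ∈ Ioo (-1) 1 := Ioo_mem_nhdsLT (by norm_num)
  change Tendsto (fun x => (∫ y in (0 : ℝ)..x, scaleDensity c y) /
    (scaleDensity c x * (1 - x ^ 2) ^ 2)) _ _
  rw [hlimit]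
  refine lhopital_atTop_nhdsLT (f' := scaleDensity c) (g' := fun x => scaleDensity c x * q x)
    ?_ ?_ ?_ (tendsto_scaleDensity_mul_sq_nhdsLT_one hc) ?_
  · filter_upwards [hmem] with x hx using hasDerivAt_integral_scaleDensity c hx
  · filter_upwards [hmem] with x hx
    exact hasDerivAt_scaleDensity_mul_sq c (by nlinarith [hx.1, hx.2])
  · filter_upwards [hq_pos] with x hx using mul_pos (Real.exp_pos _) hx
  · refine (hq.inv₀ (by positivity)).congr fun x => ?_
    exact (div_mul_cancel_left₀ (Real.exp_pos _).ne' _).symm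
end

section
/- The integral ∫₀¹ p(y)/(p'(y)(1−y²)²) dy is finite, where p'(y) = exp((2λ/μ²)·1/(1−y²)) and p(y) = ∫₀ʸ p'(z) dz. -/
open Set MeasureTheory

/-! With `c = 2λ/μ²`, write `p' = scaleDensity c`, `p = scaleFunction c` and
`g = invSpeedDensity c = p' (1 - y²)²`. Since `g' = 2y (c - 2(1 - y²)) p'`, near `1` we have
`g' ≥ (c/2) p'`, so `p ≤ (2/c) g + K` on `[0, 1)`; and `exp t ≥ t²/2` gives `g ≥ c²/2`.
Hence the continuous function `p / g` is bounded on `(0, 1)`. -/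

noncomputable section

namespace EntranceBoundary

variable {c y : ℝ}

def scaleDensity (c y : ℝ) : ℝ := Real.exp (c * (1 / (1 - y ^ 2)))

def scaleFunction (c y : ℝ) : ℝ := ∫ z in (0 : ℝ)..y, scaleDensity c z

def invSpeedDensity (c y : ℝ) : ℝ := scaleDensity c y * (1 - y ^ 2) ^ 2

lemma one_sub_sq_pos (hy : y ∈ Ioo (-1 : ℝ) 1) : 0 < 1 - y ^ 2 := by
  nlinarith [hy.1, hy.2]

lemma scaleDensity_pos (c y : ℝ) : 0 < scaleDensity c y := Real.exp_pos _

lemma invSpeedDensity_nonneg (c y : ℝ) : 0 ≤ invSpeedDensity c y :=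
  mul_nonneg (scaleDensity_pos c y).le (sq_nonneg _)

lemma continuousAt_scaleDensity (c : ℝ) (hy : y ∈ Ioo (-1 : ℝ) 1) :
    ContinuousAt (scaleDensity c) y := by
  have := (one_sub_sq_pos hy).ne'
  unfold scaleDensity
  fun_prop (disch := assumption)

lemma hasDerivAt_scaleFunction (c : ℝ) (hy : y ∈ Ioo (-1 : ℝ) 1) :
    HasDerivAt (scaleFunction c) (scaleDensity c y) y := by
  have hsub : uIcc 0 y ⊆ Ioo (-1 : ℝ) 1 := ordConnected_Ioo.uIcc_subset (by norm_num) hy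
  have hcont : ContinuousOn (scaleDensity c) (Ioo (-1 : ℝ) 1) :=
    fun z hz => (continuousAt_scaleDensity c hz).continuousWithinAt
  exact intervalIntegral.integral_hasDerivAt_right ((hcont.mono hsub).intervalIntegrable)
    (hcont.stronglyMeasurableAtFilter isOpen_Ioo y hy) (continuousAt_scaleDensity c hy)

lemma hasDerivAt_invSpeedDensity (c : ℝ) (hy : y ∈ Ioo (-1 : ℝ) 1) :
    HasDerivAt (invSpeedDensity c) (2 * y * (c - 2 * (1 - y ^ 2)) * scaleDensity c y) y := by
  have hu := (one_sub_sq_pos hy).ne'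
  have hsq : HasDerivAt (fun z : ℝ => 1 - z ^ 2) (-(2 * y)) y := by
    simpa using (hasDerivAt_pow 2 y).const_sub 1
  have hexponent : HasDerivAt (fun z : ℝ => c * (1 - z ^ 2)⁻¹)
      (c * (2 * y / (1 - y ^ 2) ^ 2)) y :=
    ((hsq.fun_inv hu).const_mul c).congr_deriv (by ring)
  unfold invSpeedDensity scaleDensity
  simp only [one_div]
  exact (hexponent.exp.fun_mul (hsq.fun_pow 2)).congr_deriv (by field_simp; ring)

lemma scaleFunction_nonneg (c : ℝ) (hy : 0 ≤ y) : 0 ≤ scaleFunction c y :=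
  intervalIntegral.integral_nonneg hy fun z _ => (scaleDensity_pos c z).le

lemma monotoneOn_scaleFunction (c : ℝ) : MonotoneOn (scaleFunction c) (Ioo (-1 : ℝ) 1) := by
  refine monotoneOn_of_hasDerivWithinAt_nonneg (convex_Ioo _ _)
    (fun z hz => (hasDerivAt_scaleFunction c hz).continuousAt.continuousWithinAt)
    (fun z hz => ?_) (fun z _ => (scaleDensity_pos c z).le)
  rw [interior_Ioo] at hz ⊢
  exact (hasDerivAt_scaleFunction c hz).hasDerivWithinAt

lemma sq_div_le_invSpeedDensity (hc : 0 ≤ c) (hy : y ∈ Ioo (-1 : ℝ) 1) :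
    c ^ 2 / 2 ≤ invSpeedDensity c y := by
  have hu := one_sub_sq_pos hy
  have hexp := Real.quadratic_le_exp_of_nonneg (by positivity : 0 ≤ c * (1 / (1 - y ^ 2)))
  calc c ^ 2 / 2 = (c * (1 / (1 - y ^ 2))) ^ 2 / 2 * (1 - y ^ 2) ^ 2 := by
        field_simp
    _ ≤ invSpeedDensity c y := by
        unfold invSpeedDensity scaleDensity
        gcongr
        linarith [show 0 ≤ c * (1 / (1 - y ^ 2)) by positivity]

lemma monotoneOn_invSpeedDensity_sub_scaleFunction (hc : 0 < c) {a : ℝ} (ha : 1 / 2 ≤ a)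
    (hca : 1 - a ≤ c / 8) :
    MonotoneOn (fun y => 2 / c * invSpeedDensity c y - scaleFunction c y) (Ico a 1) := by
  have hsub : Ico a 1 ⊆ Ioo (-1 : ℝ) 1 := fun y hy => ⟨by linarith [hy.1], hy.2⟩
  have hderiv : ∀ y ∈ Ico a 1,
      HasDerivAt (fun y => 2 / c * invSpeedDensity c y - scaleFunction c y)
        (2 / c * (2 * y * (c - 2 * (1 - y ^ 2)) * scaleDensity c y) - scaleDensity c y) y :=
    fun y hy => ((hasDerivAt_invSpeedDensity c (hsub hy)).const_mul _).sub
      (hasDerivAt_scaleFunction c (hsub hy))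
  refine monotoneOn_of_hasDerivWithinAt_nonneg (convex_Ico a 1)
    (fun y hy => (hderiv y hy).continuousAt.continuousWithinAt)
    (fun y hy => (hderiv y (interior_subset hy)).hasDerivWithinAt) (fun y hy => ?_)
  obtain ⟨hay, hy1⟩ := interior_subset hy
  have hφ := scaleDensity_pos c y
  -- near `1` we have `1 - y ^ 2 ≤ 2 (1 - y) ≤ c / 4`, so the bracket is at least `c / 2`
  have hbracket : c / 2 ≤ c - 2 * (1 - y ^ 2) := by nlinarith
  have : 1 ≤ 2 / c * (2 * y * (c - 2 * (1 - y ^ 2))) := by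
    rw [div_mul_eq_mul_div, le_div_iff₀ hc]
    nlinarith
  nlinarith

lemma exists_scaleFunction_le (hc : 0 < c) :
    ∃ K, 0 ≤ K ∧ ∀ y ∈ Ico (0 : ℝ) 1, scaleFunction c y ≤ 2 / c * invSpeedDensity c y + K := by
  set a := max (1 / 2) (1 - c / 8)
  have ha : a ∈ Ico (1 / 2 : ℝ) 1 := ⟨le_max_left _ _, max_lt (by norm_num) (by linarith)⟩
  have ha' : a ∈ Ioo (-1 : ℝ) 1 := ⟨by linarith [ha.1], ha.2⟩
  refine ⟨scaleFunction c a, scaleFunction_nonneg c (by linarith [ha.1]), fun y hy => ?_⟩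
  have hy' : y ∈ Ioo (-1 : ℝ) 1 := ⟨by linarith [hy.1], hy.2⟩
  rcases le_total y a with hya | hay
  · have := monotoneOn_scaleFunction c hy' ha' hya
    have := mul_nonneg (div_pos two_pos hc).le (invSpeedDensity_nonneg c y)
    linarith
  · have := monotoneOn_invSpeedDensity_sub_scaleFunction hc (le_max_left _ _)
      (by linarith [le_max_right (1 / 2) (1 - c / 8)]) ⟨le_rfl, ha.2⟩ ⟨hay, hy.2⟩ hay
    have := mul_nonneg (div_pos two_pos hc).le (invSpeedDensity_nonneg c a)
    linarith

lemma continuousOn_scaleFunction_div_invSpeedDensity (c : ℝ) :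
    ContinuousOn (fun y => scaleFunction c y / invSpeedDensity c y) (Ioo (-1 : ℝ) 1) := by
  intro y hy
  refine (((hasDerivAt_scaleFunction c hy).continuousAt).div
    (hasDerivAt_invSpeedDensity c hy).continuousAt ?_).continuousWithinAt
  exact (mul_pos (scaleDensity_pos c y) (pow_pos (one_sub_sq_pos hy) 2)).ne'

theorem integrableOn_scaleFunction_div_invSpeedDensity (hc : 0 < c) :
    IntegrableOn (fun y => scaleFunction c y / invSpeedDensity c y) (Ioo 0 1) := by
  obtain ⟨K, hK, hpK⟩ := exists_scaleFunction_le hc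
  have hsub : Ioo (0 : ℝ) 1 ⊆ Ioo (-1) 1 := Ioo_subset_Ioo_left (by norm_num)
  refine ⟨((continuousOn_scaleFunction_div_invSpeedDensity c).mono hsub).aestronglyMeasurable
    measurableSet_Ioo, .restrict_of_bounded (C := 2 / c + K / (c ^ 2 / 2)) measure_Ioo_lt_top ?_⟩
  filter_upwards [self_mem_ae_restrict measurableSet_Ioo] with y hy
  have hg := sq_div_le_invSpeedDensity hc.le (hsub hy)
  have hg0 : 0 < invSpeedDensity c y := lt_of_lt_of_le (by positivity) hg
  rw [Real.norm_of_nonneg (div_nonneg (scaleFunction_nonneg c hy.1.le) hg0.le)]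
  calc scaleFunction c y / invSpeedDensity c y
      ≤ (2 / c * invSpeedDensity c y + K) / invSpeedDensity c y := by
        gcongr
        exact hpK y (Ioo_subset_Ico_self hy)
    _ = 2 / c + K / invSpeedDensity c y := by field_simp
    _ ≤ 2 / c + K / (c ^ 2 / 2) := by gcongr

end EntranceBoundary

end

/-- The integral `∫₀¹ p(y)/(p'(y)(1−y²)²) dy` is finite, where
`p'(y) = exp((2λ/μ²)·1/(1−y²))` and `p(y) = ∫₀ʸ p'(z) dz`. -/
theorem stmt13 (lam mu : ℝ) (hlam : 0 < lam) (hmu : 0 < mu) :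
    MeasureTheory.IntegrableOn
      (fun y : ℝ =>
        (∫ z in (0 : ℝ)..y, Real.exp (2 * lam / mu ^ 2 * (1 / (1 - z ^ 2))))
          / (Real.exp (2 * lam / mu ^ 2 * (1 / (1 - y ^ 2))) * (1 - y ^ 2) ^ 2))
      (Set.Ioo (0 : ℝ) 1) :=
  EntranceBoundary.integrableOn_scaleFunction_div_invSpeedDensity (by positivity)
end

section
/- Let φ : (−1,1) → ℝ be a C² solution of Lφ = 0 that is strictly decreasing and strictly positive, with lim_{x→−1⁺} φ(x) = +∞ and f(x) := φ'(x)/φ(x) unbounded below as x → −1⁺ (liminf_{x→−1⁺} φ'(x)/φ(x) = −∞). Define on (0,1): h₁(x) = ((β + c₂/2)x − c₁ − c₂/2)/(φ(−x) − φ(x)) and h₂(x) = (β + c₂/2)/(−φ'(−x) − φ'(x)), where β = 1/(2λ+α), and set γ = (c₁ + c₂/2)/(β + c₂/2). If 0 ≤ c₁ < β, c₂ ≥ 0, c₁ + c₂ > 0, then there exists B ∈ (γ,1) with h₁(B) = h₂(B) > 0. -/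
open Set Filter Topology

private lemma deriv_nonpos_of_strictAntiOn (φ φ' : ℝ → ℝ)
    (hd1 : ∀ x ∈ Set.Ioo (-1 : ℝ) 1, HasDerivAt φ (φ' x) x)
    (hanti : StrictAntiOn φ (Set.Ioo (-1 : ℝ) 1)) :
    ∀ x ∈ Set.Ioo (-1 : ℝ) 1, φ' x ≤ 0 := by
  intro x hx
  have h := hasDerivAt_iff_tendsto_slope.mp (hd1 x hx)
  refine le_of_tendsto h ?_
  have hmem : Set.Ioo (-1 : ℝ) 1 ∈ 𝓝[≠] x :=
    nhdsWithin_le_nhds (isOpen_Ioo.mem_nhds hx)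
  filter_upwards [hmem, self_mem_nhdsWithin] with y hy hyne
  have hyne' : y ≠ x := hyne
  rw [slope_def_field]
  rcases hyne'.lt_or_gt with hlt | hgt
  · have := hanti hy hx hlt
    apply le_of_lt
    apply div_neg_of_pos_of_neg <;> linarith
  · have := hanti hx hy hgt
    apply le_of_lt
    apply div_neg_of_neg_of_pos <;> linarith

private lemma deriv_neg_auxx (lam mu alp : ℝ) (hlam : 0 < lam) (hmu : 0 < mu) (halp : 0 < alp)
    (φ φ' φ'' : ℝ → ℝ)
    (hd1 : ∀ x ∈ Set.Ioo (-1 : ℝ) 1, HasDerivAt φ (φ' x) x)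
    (hd2 : ∀ x ∈ Set.Ioo (-1 : ℝ) 1, HasDerivAt φ' (φ'' x) x)
    (hode : ∀ x ∈ Set.Ioo (-1 : ℝ) 1,
      mu ^ 2 / 2 * (1 - x ^ 2) ^ 2 * φ'' x - 2 * lam * x * φ' x - alp * φ x = 0)
    (hanti : StrictAntiOn φ (Set.Ioo (-1 : ℝ) 1))
    (hpos : ∀ x ∈ Set.Ioo (-1 : ℝ) 1, 0 < φ x) :
    ∀ x ∈ Set.Ioo (-1 : ℝ) 1, φ' x < 0 := by
  have hnp := deriv_nonpos_of_strictAntiOn φ φ' hd1 hanti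
  intro x hx
  rcases (hnp x hx).lt_or_eq with h | h
  · exact h
  exfalso
  have hx2 : 0 < 1 - x ^ 2 := by nlinarith [hx.1, hx.2]
  have hq : 0 < mu ^ 2 / 2 * (1 - x ^ 2) ^ 2 := by positivity
  have heq := hode x hx
  rw [h] at heq
  have hφ'' : 0 < φ'' x := by nlinarith [hpos x hx]
  have h2 := hasDerivAt_iff_tendsto_slope.mp (hd2 x hx)
  have hev : ∀ᶠ y in 𝓝[≠] x, 0 < slope φ' x y :=
    h2.eventually (eventually_gt_nhds hφ'')
  have hle : 𝓝[>] x ≤ 𝓝[≠] x :=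
    nhdsWithin_mono x fun y hy => (ne_of_gt hy : y ≠ x)
  have hev' := hev.filter_mono hle
  have hmem : ∀ᶠ y in 𝓝[>] x, y ∈ Set.Ioo (-1 : ℝ) 1 :=
    nhdsWithin_le_nhds (isOpen_Ioo.mem_nhds hx)
  obtain ⟨y, hsl, hyI, hyx⟩ := (hev'.and (hmem.and self_mem_nhdsWithin)).exists
  have hyx' : x < y := hyx
  rw [slope_def_field] at hsl
  have h4 : 0 < φ' y - φ' x := by
    have := mul_pos hsl (sub_pos.mpr hyx')
    rwa [div_mul_cancel₀ _ (by linarith : y - x ≠ 0)] at this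
  have h5 := hnp y hyI
  rw [h] at h4
  linarith

set_option maxHeartbeats 1000000 in
/-- Existence of the switching threshold `B`: under the stated hypotheses on `φ`
(`Lφ = 0`, strictly decreasing, strictly positive, `φ(−1⁺) = +∞`,
`liminf_{x→−1⁺} φ'/φ = −∞`) and on the costs (`0 ≤ c₁ < β`, `c₂ ≥ 0`, `c₁ + c₂ > 0`),
there exists `B ∈ (γ,1)` with `h₁(B) = h₂(B) > 0`. -/
theorem stmt14 (lam mu alp c₁ c₂ : ℝ) (hlam : 0 < lam) (hmu : 0 < mu) (halp : 0 < alp)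
    (hc₁ : 0 ≤ c₁) (hc₂ : 0 ≤ c₂) (hcs : 0 < c₁ + c₂) (hc₁β : c₁ < 1 / (2 * lam + alp))
    (φ φ' φ'' : ℝ → ℝ)
    (hd1 : ∀ x ∈ Set.Ioo (-1 : ℝ) 1, HasDerivAt φ (φ' x) x)
    (hd2 : ∀ x ∈ Set.Ioo (-1 : ℝ) 1, HasDerivAt φ' (φ'' x) x)
    (hode : ∀ x ∈ Set.Ioo (-1 : ℝ) 1,
      mu ^ 2 / 2 * (1 - x ^ 2) ^ 2 * φ'' x - 2 * lam * x * φ' x - alp * φ x = 0)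
    (hanti : StrictAntiOn φ (Set.Ioo (-1 : ℝ) 1))
    (hpos : ∀ x ∈ Set.Ioo (-1 : ℝ) 1, 0 < φ x)
    (hblow : Filter.Tendsto φ (nhdsWithin (-1) (Set.Ioi (-1 : ℝ))) Filter.atTop)
    (hliminf : ∀ C : ℝ, ∃ᶠ x in nhdsWithin (-1 : ℝ) (Set.Ioi (-1 : ℝ)), φ' x / φ x < C) :
    ∃ B ∈ Set.Ioo ((c₁ + c₂ / 2) / (1 / (2 * lam + alp) + c₂ / 2)) (1 : ℝ),
      ((1 / (2 * lam + alp) + c₂ / 2) * B - c₁ - c₂ / 2) / (φ (-B) - φ B)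
          = (1 / (2 * lam + alp) + c₂ / 2) / (-φ' (-B) - φ' B)
        ∧ 0 < ((1 / (2 * lam + alp) + c₂ / 2) * B - c₁ - c₂ / 2) / (φ (-B) - φ B) := by
  have hφ'neg := deriv_neg_auxx lam mu alp hlam hmu halp φ φ' φ'' hd1 hd2 hode hanti hpos
  set β := 1 / (2 * lam + alp) with hβdef
  have hβ : 0 < β := by rw [hβdef]; positivity
  set a := β + c₂ / 2 with hadef
  have ha : 0 < a := by rw [hadef]; linarith
  have hc : 0 < c₁ + c₂ / 2 := by linarith
  set γ := (c₁ + c₂ / 2) / a with hγdef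
  have hγ0 : 0 < γ := by rw [hγdef]; exact div_pos hc ha
  have hγ1 : γ < 1 := by
    rw [hγdef, div_lt_one ha, hadef]; linarith
  have haγ : a * γ = c₁ + c₂ / 2 := by
    rw [hγdef]; field_simp
  set x₁ := (1 + γ) / 2 with hx₁def
  have hx₁γ : γ < x₁ := by rw [hx₁def]; linarith
  have hx₁1 : x₁ < 1 := by rw [hx₁def]; linarith
  have hx₁0 : 0 < x₁ := by rw [hx₁def]; linarith
  set m := a * (x₁ - γ) with hmdef
  have hm : 0 < m := by rw [hmdef]; exact mul_pos ha (sub_pos.mpr hx₁γ)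
  have hm' : m = a * x₁ - a * γ := by rw [hmdef]; ring
  clear_value β a γ x₁ m
  -- find xb close to 1 where h1 > h2
  have hev2 : ∀ᶠ z in nhdsWithin (-1 : ℝ) (Set.Ioi (-1 : ℝ)), z < -x₁ := by
    filter_upwards [mem_nhdsWithin_of_mem_nhds
      (Iio_mem_nhds (by linarith : (-1 : ℝ) < -x₁))] with z hz
    exact hz
  have hev1 : ∀ᶠ z in nhdsWithin (-1 : ℝ) (Set.Ioi (-1 : ℝ)), -1 < z := by
    filter_upwards [self_mem_nhdsWithin] with z hz
    exact hz
  obtain ⟨y, hyC, hy1, hy2⟩ := ((hliminf (-(a + m) / m)).and_eventually (hev1.and hev2)).exists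
  have hyIoo : y ∈ Set.Ioo (-1 : ℝ) 1 := ⟨hy1, by linarith⟩
  have hφy : 0 < φ y := hpos y hyIoo
  have hφ'yC : φ' y < -(a + m) / m * φ y := (div_lt_iff₀ hφy).mp hyC
  have hkey : (a + m) * φ y < m * (-φ' y) := by
    have h5 : m * φ' y < m * (-(a + m) / m * φ y) := mul_lt_mul_of_pos_left hφ'yC hm
    have h6 : m * (-(a + m) / m * φ y) = -((a + m) * φ y) := by
      field_simp
    rw [h6] at h5; linarith
  set xb := -y with hxbdef
  have hxb1 : x₁ < xb := by rw [hxbdef]; linarith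
  have hxb2 : xb < 1 := by rw [hxbdef]; linarith
  have hγxb : γ < xb := lt_trans hx₁γ hxb1
  have hxbIoo : xb ∈ Set.Ioo (-1 : ℝ) 1 := ⟨by linarith, hxb2⟩
  have hnegxb : -xb = y := by rw [hxbdef]; ring
  clear_value xb
  have hφ'xb : φ' xb < 0 := hφ'neg xb hxbIoo
  have hφxb : 0 < φ xb := hpos xb hxbIoo
  have hφ'y : φ' y < 0 := hφ'neg y hyIoo
  have hNx : m ≤ a * xb - c₁ - c₂ / 2 := by
    have h7 : a * x₁ ≤ a * xb := mul_le_mul_of_nonneg_left hxb1.le ha.le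
    linarith [haγ, hm']
  have hFxb : 0 < (a * xb - c₁ - c₂ / 2) * (-φ' (-xb) - φ' xb) - a * (φ (-xb) - φ xb) := by
    rw [hnegxb]
    have h1 : m * (-φ' y - φ' xb) ≤ (a * xb - c₁ - c₂ / 2) * (-φ' y - φ' xb) :=
      mul_le_mul_of_nonneg_right hNx (by linarith)
    nlinarith [mul_nonneg hm.le (by linarith : (0:ℝ) ≤ -φ' xb), mul_pos ha hφxb,
      mul_pos hm hφy]
  have hγIoo : γ ∈ Set.Ioo (-1 : ℝ) 1 := ⟨by linarith, hγ1⟩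
  have hnγIoo : -γ ∈ Set.Ioo (-1 : ℝ) 1 := ⟨by linarith, by linarith⟩
  have hFγ : (a * γ - c₁ - c₂ / 2) * (-φ' (-γ) - φ' γ) - a * (φ (-γ) - φ γ) < 0 := by
    have h0 : a * γ - c₁ - c₂ / 2 = 0 := by linarith
    rw [h0, zero_mul]
    have h8 := hanti hnγIoo hγIoo (by linarith : -γ < γ)
    linarith [mul_pos ha (sub_pos.mpr h8)]
  have hcont : ContinuousOn
      (fun x => (a * x - c₁ - c₂ / 2) * (-φ' (-x) - φ' x) - a * (φ (-x) - φ x))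
      (Set.Icc γ xb) := by
    intro t ht
    have ht1 : t ∈ Set.Ioo (-1 : ℝ) 1 := ⟨by linarith [ht.1], by linarith [ht.2]⟩
    have ht2 : -t ∈ Set.Ioo (-1 : ℝ) 1 := ⟨by linarith [ht.2], by linarith [ht.1]⟩
    have c1 : ContinuousAt (fun x : ℝ => φ (-x)) t :=
      ((hd1 _ ht2).continuousAt).comp continuous_neg.continuousAt
    have c2 : ContinuousAt (fun x : ℝ => φ' (-x)) t :=
      ((hd2 _ ht2).continuousAt).comp continuous_neg.continuousAt
    have c3 : ContinuousAt φ' t := (hd2 _ ht1).continuousAt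
    have c4 : ContinuousAt φ t := (hd1 _ ht1).continuousAt
    exact (((by fun_prop : ContinuousAt (fun x : ℝ => a * x - c₁ - c₂ / 2) t).mul
      (c2.neg.sub c3)).sub (continuousAt_const.mul (c1.sub c4))).continuousWithinAt
  obtain ⟨B, hBmem, hFB⟩ := intermediate_value_Ioo (le_of_lt hγxb) hcont ⟨hFγ, hFxb⟩
  have hFB' : (a * B - c₁ - c₂ / 2) * (-φ' (-B) - φ' B) - a * (φ (-B) - φ B) = 0 := hFB
  have hBγ := hBmem.1
  have hBxb := hBmem.2
  have hB1 : B < 1 := lt_trans hBxb hxb2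
  have hBIoo : B ∈ Set.Ioo (-1 : ℝ) 1 := ⟨by linarith, hB1⟩
  have hnBIoo : -B ∈ Set.Ioo (-1 : ℝ) 1 := ⟨by linarith, by linarith⟩
  have hD1 : 0 < φ (-B) - φ B := sub_pos.mpr (hanti hnBIoo hBIoo (by linarith : -B < B))
  have hD2 : 0 < -φ' (-B) - φ' B := by
    have := hφ'neg (-B) hnBIoo
    have := hφ'neg B hBIoo
    linarith
  have hN : 0 < a * B - c₁ - c₂ / 2 := by
    nlinarith [mul_lt_mul_of_pos_left hBγ ha]
  refine ⟨B, ⟨hBγ, hB1⟩, ?_, ?_⟩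
  · rw [div_eq_div_iff (ne_of_gt hD1) (ne_of_gt hD2)]
    linarith [hFB']
  · exact div_pos hN hD1
end
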